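/- A sequence m ∈ ℤ^{k+1} is a path for q > 0 if and only if P_ℓ(q,m) ≠ 0 for all 0 ≤ ℓ < k; in that case m is a loop if and only if P_k(q,m) = 0, and the weight satisfies w_q(m) = |q^{-k/2} · Q_k(q,m)|. -/

import Mathlib

/-!
Evaluated at `x = q`, the recursion for `(P_ℓ, Q_ℓ)` is the numerator/denominator recursion of
the continued fraction, so `c(q, (m₀,…,m_ℓ)) · Q_ℓ(q) = P_ℓ(q)` along a path; since
`Q_{ℓ+1}(q) = q · P_ℓ(q)`, this telescopes to `Q_k(q) = q^k ∏_{j<k} c(q, (m₀,…,m_j))`, which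
cannot vanish along a path.
-/

/-- `cfF q m j = c(q, (m₀,…,m_j))`. -/
noncomputable def cfF (q : ℝ) (m : ℕ → ℤ) : ℕ → ℝ
  | 0 => (m 0 : ℝ)
  | j + 1 => (m (j + 1) : ℝ) + 1 / (q * cfF q m j)

/-- `(m₀,…,m_k)` is a path for `q`: all denominators nonzero. -/
def IsPathF (q : ℝ) (m : ℕ → ℤ) (k : ℕ) : Prop := ∀ j < k, cfF q m j ≠ 0

/-- the weight `q^{k/2} ∏_{j<k} |c(q, m_j)|`. -/
noncomputable def weightF (q : ℝ) (m : ℕ → ℤ) (k : ℕ) : ℝ :=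
  Real.sqrt (q ^ k) * ∏ j ∈ Finset.range k, |cfF q m j|

/-- the pair of polynomials `(P_ℓ(x, m), Q_ℓ(x, m))`. -/
noncomputable def PQ (m : ℕ → ℤ) : ℕ → Polynomial ℤ × Polynomial ℤ
  | 0 => (Polynomial.C (m 0), 1)
  | l + 1 => (Polynomial.C (m (l + 1)) * Polynomial.X * (PQ m l).1 + (PQ m l).2,
      Polynomial.X * (PQ m l).1)

open Polynomial

section

variable {q : ℝ} {m : ℕ → ℤ} {k : ℕ}

theorem isPathF_zero : IsPathF q m 0 := fun _ hj => absurd hj (Nat.not_lt_zero _)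

theorem isPathF_succ : IsPathF q m (k + 1) ↔ IsPathF q m k ∧ cfF q m k ≠ 0 := by
  simp only [IsPathF, Nat.lt_succ_iff_lt_or_eq, or_imp, forall_and, forall_eq]

theorem aeval_PQ_succ_fst (l : ℕ) :
    aeval q (PQ m (l + 1)).1 = m (l + 1) * q * aeval q (PQ m l).1 + aeval q (PQ m l).2 := by
  simp [PQ]

theorem aeval_PQ_succ_snd (l : ℕ) : aeval q (PQ m (l + 1)).2 = q * aeval q (PQ m l).1 := by
  simp [PQ]

theorem cfF_mul_aeval_PQ_snd (hq : q ≠ 0) :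
    ∀ {l}, IsPathF q m l → cfF q m l * aeval q (PQ m l).2 = aeval q (PQ m l).1
  | 0, _ => by simp [cfF, PQ]
  | l + 1, h => by
    obtain ⟨hl, hc⟩ := isPathF_succ.mp h
    rw [aeval_PQ_succ_fst, aeval_PQ_succ_snd, cfF, ← cfF_mul_aeval_PQ_snd hq hl]
    field_simp

theorem aeval_PQ_snd_eq_pow_mul_prod (hq : q ≠ 0) :
    ∀ {k}, IsPathF q m k → aeval q (PQ m k).2 = q ^ k * ∏ j ∈ Finset.range k, cfF q m j
  | 0, _ => by simp [PQ]
  | k + 1, h => by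
    have hk := (isPathF_succ.mp h).1
    rw [aeval_PQ_succ_snd, ← cfF_mul_aeval_PQ_snd hq hk, aeval_PQ_snd_eq_pow_mul_prod hq hk,
      Finset.prod_range_succ, pow_succ]
    ring

theorem aeval_PQ_snd_ne_zero (hq : q ≠ 0) (h : IsPathF q m k) : aeval q (PQ m k).2 ≠ 0 := by
  rw [aeval_PQ_snd_eq_pow_mul_prod hq h]
  exact mul_ne_zero (pow_ne_zero k hq) (Finset.prod_ne_zero_iff.mpr fun j hj =>
    h j (Finset.mem_range.mp hj))

theorem aeval_PQ_fst_eq_zero_iff (hq : q ≠ 0) (h : IsPathF q m k) :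
    aeval q (PQ m k).1 = 0 ↔ cfF q m k = 0 := by
  rw [← cfF_mul_aeval_PQ_snd hq h, mul_eq_zero, or_iff_left (aeval_PQ_snd_ne_zero hq h)]

theorem isPathF_iff_forall_aeval_PQ_fst_ne_zero (hq : q ≠ 0) :
    ∀ {k}, IsPathF q m k ↔ ∀ l < k, aeval q (PQ m l).1 ≠ 0
  | 0 => iff_of_true isPathF_zero fun _ hl => absurd hl (Nat.not_lt_zero _)
  | k + 1 => by
    rw [isPathF_succ]
    simp only [Nat.lt_succ_iff_lt_or_eq, or_imp, forall_and, forall_eq]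
    exact (and_congr_right fun hk => (aeval_PQ_fst_eq_zero_iff hq hk).not.symm).trans
      (and_congr_left' (isPathF_iff_forall_aeval_PQ_fst_ne_zero hq))

theorem weightF_eq_abs_aeval_PQ_snd (hq : 0 < q) (h : IsPathF q m k) :
    weightF q m k = |(Real.sqrt (q ^ k))⁻¹ * aeval q (PQ m k).2| := by
  have hqk : 0 < q ^ k := pow_pos hq k
  rw [aeval_PQ_snd_eq_pow_mul_prod hq.ne' h, ← mul_assoc, abs_mul, Finset.abs_prod, weightF,
    inv_mul_eq_div, Real.div_sqrt, abs_of_nonneg (Real.sqrt_nonneg _)]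

end

theorem stmt17 (q : ℝ) (hq : 0 < q) (m : ℕ → ℤ) (k : ℕ) :
    (IsPathF q m k ↔ ∀ l < k, Polynomial.aeval q ((PQ m l).1) ≠ 0) ∧
    (IsPathF q m k → (cfF q m k = 0 ↔ Polynomial.aeval q ((PQ m k).1) = 0)) ∧
    (IsPathF q m k →
      weightF q m k = |(Real.sqrt (q ^ k))⁻¹ * Polynomial.aeval q ((PQ m k).2)|) :=
  ⟨isPathF_iff_forall_aeval_PQ_fst_ne_zero hq.ne',
    fun h => (aeval_PQ_fst_eq_zero_iff hq.ne' h).symm,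
    weightF_eq_abs_aeval_PQ_snd hq⟩
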